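/- arXiv:1009.2617 — 6 statements merged into one kernel-verified Lean document; each statement's English description precedes it below -/
import Mathlib

section
/- If n ≥ 1 and α i > 0 for every item i, then there exists exactly one real number μ such that ∑_{i} max((v i − μ)/(α i), 0) = 1. Equivalently, there is a unique μ together with frequencies f i ≥ 0 with ∑ f i = 1 such that v i − f i·α i = μ whenever f i > 0 and v i ≤ μ whenever f i = 0. -/
/-- If `n ≥ 1` and all boredom coefficients are positive, there is exactly one `μ` with
`∑ i, max((v i − μ)/α i, 0) = 1`; equivalently, a unique `μ` admitting frequencies
`f i ≥ 0`, `∑ f i = 1`, with `v i − f i·α i = μ` whenever `f i > 0` and `v i ≤ μ` whenever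
`f i = 0`. -/
theorem unique_equalizing_utility (n : ℕ) (hn : 1 ≤ n) (v α : Fin n → ℝ)
    (hα : ∀ i, 0 < α i) :
    (∃! μ : ℝ, ∑ i : Fin n, max ((v i - μ) / α i) 0 = 1) ∧
    (∃! μ : ℝ, ∃ f : Fin n → ℝ, (∀ i, 0 ≤ f i) ∧ (∑ i : Fin n, f i = 1) ∧
      (∀ i, 0 < f i → v i - f i * α i = μ) ∧ (∀ i, f i = 0 → v i ≤ μ)) := by
  set F : ℝ → ℝ := fun μ => ∑ i : Fin n, max ((v i - μ) / α i) 0 with hFdef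
  have hcont : Continuous F := by
    apply continuous_finset_sum
    intro i _
    exact ((continuous_const.sub continuous_id).div_const _).max continuous_const
  have i0 : Fin n := ⟨0, hn⟩
  set M := Finset.univ.sup' ⟨i0, Finset.mem_univ i0⟩ v with hM
  have hle : v i0 - α i0 ≤ M :=
    le_trans (by linarith [hα i0]) (Finset.le_sup' v (Finset.mem_univ i0))
  have hF0 : F M = 0 := by
    apply Finset.sum_eq_zero
    intro i _
    have h1 : v i ≤ M := Finset.le_sup' v (Finset.mem_univ i)
    have h2 : (v i - M) / α i ≤ 0 :=
      div_nonpos_of_nonpos_of_nonneg (by linarith) (hα i).le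
    exact max_eq_right h2
  have hF1 : 1 ≤ F (v i0 - α i0) := by
    have h1 : (v i0 - (v i0 - α i0)) / α i0 = 1 := by
      rw [sub_sub_cancel, div_self (hα i0).ne']
    have h2 : max ((v i0 - (v i0 - α i0)) / α i0) 0 ≤ F (v i0 - α i0) :=
      Finset.single_le_sum (f := fun i => max ((v i - (v i0 - α i0)) / α i) 0)
        (fun i _ => le_max_right _ _) (Finset.mem_univ i0)
    rw [h1] at h2
    simpa using h2
  have hexist : ∃ μ, F μ = 1 := by
    have key := intermediate_value_Icc' hle hcont.continuousOn
    have h1mem : (1:ℝ) ∈ Set.Icc (F M) (F (v i0 - α i0)) := ⟨by rw [hF0]; norm_num, hF1⟩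
    obtain ⟨μ, _, hμ⟩ := key h1mem
    exact ⟨μ, hμ⟩
  have huniq : ∀ a b, F a = 1 → F b = 1 → a = b := by
    have key : ∀ a b, a < b → F b = 1 → F b < F a := by
      intro a b hab hb
      have hpos : ∃ j, 0 < max ((v j - b) / α j) 0 := by
        by_contra h
        push_neg at h
        have : F b ≤ 0 := Finset.sum_nonpos (fun i _ => h i)
        rw [hb] at this; linarith
      obtain ⟨j, hj⟩ := hpos
      have hvj : b < v j := by
        by_contra h
        push_neg at h
        have h2 : (v j - b) / α j ≤ 0 :=
          div_nonpos_of_nonpos_of_nonneg (by linarith) (hα j).le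
        rw [max_eq_right h2] at hj; linarith
      apply Finset.sum_lt_sum
      · intro i _
        apply max_le_max _ le_rfl
        gcongr
        all_goals linarith [hα i]
      · refine ⟨j, Finset.mem_univ j, ?_⟩
        have h1 : (0:ℝ) ≤ (v j - b) / α j := div_nonneg (by linarith) (hα j).le
        have h2 : (0:ℝ) ≤ (v j - a) / α j := div_nonneg (by linarith) (hα j).le
        rw [max_eq_left h1, max_eq_left h2]
        gcongr
        all_goals linarith [hα j]
    intro a b ha hb
    rcases lt_trichotomy a b with h | h | h
    · exfalso; have := key a b h hb; rw [ha, hb] at this; linarith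
    · exact h
    · exfalso; have := key b a h ha; rw [ha, hb] at this; linarith
  have hequiv : ∀ μ : ℝ, (∃ f : Fin n → ℝ, (∀ i, 0 ≤ f i) ∧ (∑ i : Fin n, f i = 1) ∧
      (∀ i, 0 < f i → v i - f i * α i = μ) ∧ (∀ i, f i = 0 → v i ≤ μ)) ↔ F μ = 1 := by
    intro μ
    constructor
    · rintro ⟨f, hf0, hfsum, hfp, hfz⟩
      have : ∀ i ∈ Finset.univ, max ((v i - μ) / α i) 0 = f i := by
        intro i _
        rcases eq_or_lt_of_le (hf0 i) with h | h
        · have hv := hfz i h.symm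
          rw [← h]
          exact max_eq_right (div_nonpos_of_nonpos_of_nonneg (by linarith) (hα i).le)
        · have := hfp i h
          have hfi : f i = (v i - μ) / α i := by
            rw [eq_div_iff (hα i).ne']
            linarith
          rw [← hfi]
          exact max_eq_left (hf0 i)
      show (∑ i : Fin n, max ((v i - μ) / α i) 0) = 1
      rw [Finset.sum_congr rfl this, hfsum]
    · intro hμ
      refine ⟨fun i => max ((v i - μ) / α i) 0, fun i => le_max_right _ _, hμ, ?_, ?_⟩
      · intro i hi
        dsimp only at hi ⊢
        have h1 : (0:ℝ) < (v i - μ) / α i := by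
          by_contra h
          push_neg at h
          rw [max_eq_right h] at hi; linarith
        rw [max_eq_left h1.le, div_mul_cancel₀ _ (hα i).ne']
        ring
      · intro i hi
        dsimp only at hi
        by_contra hc
        push_neg at hc
        have h1 : (0:ℝ) < (v i - μ) / α i := div_pos (by linarith) (hα i)
        rw [max_eq_left h1.le] at hi; linarith
  obtain ⟨μ, hμ⟩ := hexist
  constructor
  · exact ⟨μ, hμ, fun y hy => huniq y μ hy hμ⟩
  · exact ⟨μ, (hequiv μ).mpr hμ, fun y hy => huniq y μ ((hequiv y).mp hy) hμ⟩
end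

section
/- Suppose α i > 0 for all i and let μ be the unique real number with ∑_{i} max((v i − μ)/(α i), 0) = 1. If at time t the memories satisfy ∑_{i} M i t ≤ 1, then there exists an item i with u i t ≥ μ; in particular max_{i} u i t ≥ μ. -/
/-!
Write `q i = (v i - μ) / α i`, so that `u i t ≥ μ` means `M i t ≤ q i`. Memories are
nonnegative, so if `M i t > q i` for every `i` then `M i t ≥ max (q i) 0`, strictly at any `i`
with `q i > 0`; such an `i` exists since these positive parts sum to `1`. Summing gives
`∑ i, M i t > 1`.
-/

/-- The memory of item `i` at time `t`, given decay rate `r` and selection sequence `x`. -/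
def memory {n : ℕ} (r : ℝ) (x : ℕ → Fin n) (i : Fin n) : ℕ → ℝ
  | 0 => 0
  | t + 1 => (1 - r) * memory r x i t + r * (if x t = i then 1 else 0)

open Finset

theorem exists_le_of_sum_le_sum_max_zero {ι : Type*} [Fintype ι] {m q : ι → ℝ}
    (hm : ∀ i, 0 ≤ m i) (hpos : 0 < ∑ i, max (q i) 0)
    (hsum : ∑ i, m i ≤ ∑ i, max (q i) 0) : ∃ i, m i ≤ q i := by
  by_contra! hlt
  obtain ⟨j, -, hj⟩ : ∃ j ∈ univ, (0 : ℝ) < max (q j) 0 :=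
    exists_lt_of_sum_lt (by simpa using hpos)
  have hstrict : max (q j) 0 < m j := max_lt (hlt j) (hj.trans_le (max_le (hlt j).le (hm j)))
  exact (sum_lt_sum (fun i _ => max_le (hlt i).le (hm i)) ⟨j, mem_univ j, hstrict⟩).not_ge hsum

theorem memory_nonneg {n : ℕ} {r : ℝ} (hr0 : 0 ≤ r) (hr1 : r ≤ 1) (x : ℕ → Fin n) (i : Fin n) :
    ∀ t, 0 ≤ memory r x i t
  | 0 => le_rfl
  | t + 1 => by
    have := memory_nonneg hr0 hr1 x i t
    rw [memory]
    split_ifs <;> nlinarith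

/-- If `μ` is the (unique) real with `∑ i, max((v i − μ)/α i, 0) = 1` and the memories at
time `t` satisfy `∑ i, M i t ≤ 1`, then some item has utility `u i t = v i − α i·M i t ≥ μ`;
in particular `max_i u i t ≥ μ`. -/
theorem max_utility_lower_bound (n : ℕ) (hn : 1 ≤ n) (r : ℝ) (hr0 : 0 < r) (hr1 : r < 1)
    (v α : Fin n → ℝ) (hα : ∀ i, 0 < α i) (x : ℕ → Fin n) (μ : ℝ)
    (hμ : ∑ i : Fin n, max ((v i - μ) / α i) 0 = 1)
    (t : ℕ) (hM : ∑ i : Fin n, memory r x i t ≤ 1) :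
    (∃ i : Fin n, μ ≤ v i - α i * memory r x i t) ∧
    μ ≤ Finset.univ.sup' ⟨⟨0, hn⟩, Finset.mem_univ _⟩
        (fun i : Fin n => v i - α i * memory r x i t) := by
  obtain ⟨i, hi⟩ := exists_le_of_sum_le_sum_max_zero (q := fun i => (v i - μ) / α i)
    (memory_nonneg hr0.le hr1.le x · t) (hμ ▸ one_pos) (hμ ▸ hM)
  have hμi : μ ≤ v i - α i * memory r x i t := by
    rw [le_div_iff₀ (hα i)] at hi
    linarith
  exact ⟨⟨i, hμi⟩, le_sup'_of_le _ (mem_univ i) hμi⟩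
end

section
/- For every r ∈ (0,1) and every f ∈ (0,1], the quantity Δ(f) = r·(1−r)^{1/f} / (1 − (1−r)^{1/f}) (with real exponentiation) satisfies Δ(f) ≥ f − r, with equality when f = 1. -/
/-! Bernoulli's inequality for the exponent `1 / f ≥ 1` gives `(1 - r) ^ (1 / f) ≥ 1 - r / f`,
i.e. `f * (1 - x) ≤ r` for `x = (1 - r) ^ (1 / f)`; clearing the denominator `1 - x > 0`,
the bound `f - r ≤ r * x / (1 - x)` is the same inequality. -/

open Real

lemma mul_one_sub_rpow_one_div_le {r f : ℝ} (hr : r ≤ 1) (hf0 : 0 < f) (hf1 : f ≤ 1) :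
    f * (1 - (1 - r) ^ (1 / f)) ≤ r := by
  have hp : 1 ≤ 1 / f := (le_div_iff₀ hf0).mpr (by linarith)
  have hbern : 1 + 1 / f * -r ≤ (1 + -r) ^ (1 / f) :=
    one_add_mul_self_le_rpow_one_add (by linarith) hp
  rw [← sub_eq_add_neg] at hbern
  have hr' : 1 - r / f ≤ (1 - r) ^ (1 / f) := by
    convert hbern using 1; ring
  calc f * (1 - (1 - r) ^ (1 / f)) ≤ f * (r / f) := by gcongr; linarith
    _ = r := by field_simp

lemma sub_le_mul_div_one_sub {r f x : ℝ} (hx : x < 1) (h : f * (1 - x) ≤ r) :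
    f - r ≤ r * x / (1 - x) := by
  rw [le_div_iff₀ (by linarith)]
  linarith

/-- For `r ∈ (0,1)` and `f ∈ (0,1]`, the steady-state memory
`Δ(f) = r·(1−r)^(1/f) / (1 − (1−r)^(1/f))` (real exponentiation) satisfies
`Δ(f) ≥ f − r`, with equality when `f = 1`. -/
theorem steady_state_memory_lower_bound (r f : ℝ) (hr0 : 0 < r) (hr1 : r < 1)
    (hf0 : 0 < f) (hf1 : f ≤ 1) :
    f - r ≤ r * (1 - r) ^ (1 / f) / (1 - (1 - r) ^ (1 / f)) ∧
    (f = 1 → r * (1 - r) ^ (1 / f) / (1 - (1 - r) ^ (1 / f)) = f - r) := by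
  have hx : (1 - r) ^ (1 / f) < 1 := rpow_lt_one (by linarith) (by linarith) (by positivity)
  refine ⟨sub_le_mul_div_one_sub hx (mul_one_sub_rpow_one_div_le hr1.le hf0 hf1), ?_⟩
  rintro rfl
  rw [div_one, rpow_one, sub_sub_cancel, mul_div_cancel_left₀ _ hr0.ne']
end

section
/- (Regular spacing minimizes periodic memory) Let k ≥ 1 be an integer, T > 0 and r ∈ (0,1) be reals, and let x : Fin k → ℝ satisfy x i > 0 for all i and ∑_{i} x i = T. For i, ℓ ∈ {0,…,k−1} define the cyclic partial sum X i ℓ = ∑_{j=0}^{ℓ} x ((i+j) mod k). Then ∑_{ℓ=0}^{k−1} ∑_{i=0}^{k−1} (1−r)^{X i ℓ} ≥ k·(1−r)^{T/k}·(1 − (1−r)^{T}) / (1 − (1−r)^{T/k}), with equality when x i = T/k for all i (real exponentiation throughout). -/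
/-!
Every gap is counted `ℓ + 1` times among the `k` cyclic partial sums of length `ℓ + 1`, so
these sums add up to `(ℓ + 1) T`. Convexity of `t ↦ (1 - r) ^ t` (Jensen with uniform weights)
then bounds the `ℓ`-th row from below by `k (1 - r) ^ ((ℓ + 1) T / k)`, its value for equal gaps,
and summing this geometric series in `ℓ` gives the closed form.
-/

open Finset

theorem Finset.sum_range_add_mod {M : Type*} [AddCommMonoid M] (f : ℕ → M) (k j : ℕ) :
    ∑ i ∈ range k, f ((i + j) % k) = ∑ i ∈ range k, f i := by
  rcases Nat.eq_zero_or_pos k with rfl | hk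
  · simp
  have : NeZero k := ⟨hk.ne'⟩
  rw [← Fin.sum_univ_eq_sum_range, ← Fin.sum_univ_eq_sum_range]
  exact Fintype.sum_equiv (Equiv.addRight (Fin.ofNat k j)) _ _
    fun i => by simp [Fin.val_add]

theorem Finset.sum_range_sum_range_add_mod {M : Type*} [AddCommMonoid M] (f : ℕ → M)
    (k m : ℕ) :
    ∑ i ∈ range k, ∑ j ∈ range m, f ((i + j) % k) = m • ∑ i ∈ range k, f i := by
  rw [sum_comm]
  simp only [sum_range_add_mod, sum_const, card_range]

theorem ConvexOn.card_mul_map_sum_div_card_le {ι : Type*} {D : Set ℝ} {f : ℝ → ℝ}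
    (hf : ConvexOn ℝ D f) {s : Finset ι} (hs : s.Nonempty) {p : ι → ℝ}
    (hp : ∀ i ∈ s, p i ∈ D) :
    #s * f ((∑ i ∈ s, p i) / #s) ≤ ∑ i ∈ s, f (p i) := by
  have hcard : (0 : ℝ) < #s := by exact_mod_cast hs.card_pos
  have h := hf.map_sum_le (w := fun _ => (#s : ℝ)⁻¹) (fun _ _ => by positivity)
    (by simp [hcard.ne']) hp
  simp only [smul_eq_mul, ← mul_sum] at h
  rw [inv_mul_eq_div] at h
  rwa [← le_inv_mul_iff₀ hcard]

theorem geom_sum_succ_eq {K : Type*} [Field K] {q : K} (hq : q ≠ 1) (k : ℕ) :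
    ∑ ℓ ∈ range k, q ^ (ℓ + 1) = q * (1 - q ^ k) / (1 - q) := by
  rw [eq_div_iff (sub_ne_zero.2 hq.symm), ← geom_sum_mul_neg, ← mul_assoc, mul_sum]
  simp only [pow_succ']

theorem card_mul_rpow_le_sum_rpow_cyclic_sum {c : ℝ} (hc : 0 < c) {k : ℕ} (hk : 0 < k)
    (x : ℕ → ℝ) (m : ℕ) :
    k * c ^ (m * (∑ i ∈ range k, x i) / k)
      ≤ ∑ i ∈ range k, c ^ (∑ j ∈ range m, x ((i + j) % k)) := by
  have h := (convexOn_rpow_left hc).card_mul_map_sum_div_card_le (nonempty_range_iff.2 hk.ne')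
    (p := fun i => ∑ j ∈ range m, x ((i + j) % k)) (fun _ _ => Set.mem_univ _)
  simpa only [card_range, sum_range_sum_range_add_mod, nsmul_eq_mul] using h

theorem regular_spacing_minimizes_memory_general (k : ℕ) (hk : 1 ≤ k) (T r : ℝ)
    (hT : 0 < T) (hr0 : 0 < r) (hr1 : r < 1)
    (x : ℕ → ℝ) (hsum : ∑ i ∈ Finset.range k, x i = T) :
    ((k : ℝ) * (1 - r) ^ (T / (k : ℝ)) * (1 - (1 - r) ^ T) / (1 - (1 - r) ^ (T / (k : ℝ)))
      ≤ ∑ ℓ ∈ Finset.range k, ∑ i ∈ Finset.range k,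
          (1 - r) ^ (∑ j ∈ Finset.range (ℓ + 1), x ((i + j) % k))) ∧
    ((∀ i < k, x i = T / (k : ℝ)) →
      ∑ ℓ ∈ Finset.range k, ∑ i ∈ Finset.range k,
          (1 - r) ^ (∑ j ∈ Finset.range (ℓ + 1), x ((i + j) % k))
        = (k : ℝ) * (1 - r) ^ (T / (k : ℝ)) * (1 - (1 - r) ^ T)
            / (1 - (1 - r) ^ (T / (k : ℝ)))) := by
  have hc : 0 < 1 - r := by linarith
  have hkR : (0 : ℝ) < k := by exact_mod_cast hk
  set q := (1 - r) ^ (T / k) with hq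
  have hq_pow (m : ℕ) : (1 - r) ^ (m * T / k) = q ^ m := by
    rw [hq, ← Real.rpow_natCast, ← Real.rpow_mul hc.le, mul_div_assoc, mul_comm]
  have hq_ne : q ≠ 1 := (Real.rpow_lt_one hc.le (by linarith) (by positivity)).ne
  have hRHS : (k : ℝ) * q * (1 - (1 - r) ^ T) / (1 - q) = ∑ ℓ ∈ range k, k * q ^ (ℓ + 1) := by
    rw [← mul_sum, geom_sum_succ_eq hq_ne, ← hq_pow, mul_div_cancel_left₀ _ hkR.ne']
    ring
  rw [hRHS]
  refine ⟨sum_le_sum fun ℓ _ => ?_, fun hx => sum_congr rfl fun ℓ _ => ?_⟩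
  · simpa only [hsum, hq_pow] using card_mul_rpow_le_sum_rpow_cyclic_sum hc (x := x) hk (ℓ + 1)
  · have hX (i : ℕ) : ∑ j ∈ range (ℓ + 1), x ((i + j) % k) = ((ℓ + 1 : ℕ) : ℝ) * T / k := by
      rw [sum_congr rfl fun j _ => hx _ (Nat.mod_lt _ hk)]
      simp only [sum_const, card_range, nsmul_eq_mul, mul_div_assoc]
    simp only [hX, hq_pow, sum_const, card_range, nsmul_eq_mul]

/-- (Regular spacing minimizes periodic memory) If an item is consumed `k` times per
period `T` with positive gaps `x 0, …, x (k−1)` summing to `T`, and `X i ℓ` denotes the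
cyclic partial sum `∑_{j=0}^{ℓ} x ((i+j) mod k)`, then
`∑_{ℓ<k} ∑_{i<k} (1−r)^(X i ℓ) ≥ k·(1−r)^(T/k)·(1 − (1−r)^T)/(1 − (1−r)^(T/k))`,
with equality when all gaps equal `T/k` (real exponentiation throughout). -/
theorem regular_spacing_minimizes_memory (k : ℕ) (hk : 1 ≤ k) (T r : ℝ)
    (hT : 0 < T) (hr0 : 0 < r) (hr1 : r < 1)
    (x : ℕ → ℝ) (hx : ∀ i < k, 0 < x i) (hsum : ∑ i ∈ Finset.range k, x i = T) :
    ((k : ℝ) * (1 - r) ^ (T / (k : ℝ)) * (1 - (1 - r) ^ T) / (1 - (1 - r) ^ (T / (k : ℝ)))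
      ≤ ∑ ℓ ∈ Finset.range k, ∑ i ∈ Finset.range k,
          (1 - r) ^ (∑ j ∈ Finset.range (ℓ + 1), x ((i + j) % k))) ∧
    ((∀ i < k, x i = T / (k : ℝ)) →
      ∑ ℓ ∈ Finset.range k, ∑ i ∈ Finset.range k,
          (1 - r) ^ (∑ j ∈ Finset.range (ℓ + 1), x ((i + j) % k))
        = (k : ℝ) * (1 - r) ^ (T / (k : ℝ)) * (1 - (1 - r) ^ T)
            / (1 - (1 - r) ^ (T / (k : ℝ)))) :=
  regular_spacing_minimizes_memory_general k hk T r hT hr0 hr1 x hsum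
end

section
/- (Optimality conditions for the quadratic program) Suppose α i > 0 for all i. Let f* : Fin n → ℝ satisfy f* i ≥ 0 and ∑_{i} f* i = 1, and suppose there exists μ ∈ ℝ such that for every i: if f* i > 0 then v i − 2·α i·f* i = μ, and if f* i = 0 then v i ≤ μ. Then for every f : Fin n → ℝ with f i ≥ 0 and ∑_{i} f i = 1, one has ∑_{i} f i·(v i − α i·f i) ≤ ∑_{i} f* i·(v i − α i·f* i). Moreover ∑_{i} f* i·(v i − α i·f* i) = μ + ∑_{i} α i·(f* i)². -/
/-- (Optimality conditions for the quadratic program) If `f* ≥ 0`, `∑ i, f* i = 1`, and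
there is `μ` with `v i − 2·α i·f* i = μ` whenever `f* i > 0` and `v i ≤ μ` whenever
`f* i = 0`, then `f*` maximizes `∑ i, f i·(v i − α i·f i)` over the simplex, and its value
is `μ + ∑ i, α i·(f* i)²`. -/
theorem quadratic_program_optimality (n : ℕ) (hn : 1 ≤ n) (v α : Fin n → ℝ)
    (hα : ∀ i, 0 < α i) (fstar : Fin n → ℝ) (hf0 : ∀ i, 0 ≤ fstar i)
    (hfsum : ∑ i : Fin n, fstar i = 1) (μ : ℝ)
    (hpos : ∀ i, 0 < fstar i → v i - 2 * α i * fstar i = μ)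
    (hzero : ∀ i, fstar i = 0 → v i ≤ μ) :
    (∀ f : Fin n → ℝ, (∀ i, 0 ≤ f i) → ∑ i : Fin n, f i = 1 →
      ∑ i : Fin n, f i * (v i - α i * f i) ≤
        ∑ i : Fin n, fstar i * (v i - α i * fstar i)) ∧
    (∑ i : Fin n, fstar i * (v i - α i * fstar i) = μ + ∑ i : Fin n, α i * fstar i ^ 2) := by
  have hvb : ∀ i, v i ≤ μ + 2 * α i * fstar i := by
    intro i
    rcases (hf0 i).lt_or_eq with h | h
    · linarith [hpos i h]
    · have := hzero i h.symm
      nlinarith [hα i]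
  have hval : ∑ i : Fin n, fstar i * (v i - α i * fstar i)
      = μ + ∑ i : Fin n, α i * fstar i ^ 2 := by
    have h1 : ∀ i ∈ Finset.univ, fstar i * (v i - α i * fstar i)
        = fstar i * μ + α i * fstar i ^ 2 := by
      intro i _
      rcases (hf0 i).lt_or_eq with h | h
      · have := hpos i h; nlinarith
      · simp [← h]
    rw [Finset.sum_congr rfl h1, Finset.sum_add_distrib, ← Finset.sum_mul, hfsum]
    ring
  refine ⟨fun f hf hfs => ?_, hval⟩
  rw [hval]
  have h2 : ∀ i ∈ Finset.univ, f i * (v i - α i * f i)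
      ≤ f i * μ + α i * fstar i ^ 2 := by
    intro i _
    have := hvb i
    nlinarith [hα i, sq_nonneg (f i - fstar i), hf i]
  calc ∑ i : Fin n, f i * (v i - α i * f i)
      ≤ ∑ i : Fin n, (f i * μ + α i * fstar i ^ 2) := Finset.sum_le_sum h2
    _ = μ + ∑ i : Fin n, α i * fstar i ^ 2 := by
        rw [Finset.sum_add_distrib, ← Finset.sum_mul, hfs]; ring
end

section
/- (Society behaves like a single individual) Let A be a real symmetric n×n matrix, ε ∈ (0,1], and p ∈ ℝⁿ a unit vector with A·p = p such that ‖A·y‖₂ ≤ (1−ε)·‖y‖₂ for every y orthogonal to p. Fix an item i with base-utility vector vᵢ ∈ ℝⁿ and boredom-coefficient vector αᵢ ∈ ℝⁿ with nonnegative entries, let r ∈ (0,1), and let x : ℕ → Fin m be the society's selection sequence. Define per-person memories by Mᵢⱼ(0) = 0 and Mᵢⱼ(t+1) = (1−r)·Mᵢⱼ(t) + r·(if x t = i then 1 else 0), the boredom vector bᵢ(t) ∈ ℝⁿ by (bᵢ(t))ⱼ = (αᵢ)ⱼ·Mᵢⱼ(t), and the utility vectors by uᵢ(0) = vᵢ and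 uᵢ(t+1) = A·uᵢ(t) − (bᵢ(t+1) − bᵢ(t)). Then with 𝟙 the all-ones vector and c = ⟪p, 𝟙⟫·p, for every t ≥ 0: |𝟙ᵀuᵢ(t) − (cᵀvᵢ − cᵀbᵢ(t))| ≤ √n·((1−ε)ᵗ·‖vᵢ‖₂ + (r/ε)·‖αᵢ‖₂). In particular, the per-person welfare Wᵢ(t)/n = 𝟙ᵀuᵢ(t)/n differs from the utility ũᵢ(t) = (cᵀvᵢ − cᵀbᵢ(t))/n of a single individual with base utility cᵀvᵢ/n and boredom vector cᵀbᵢ(t)/n by at most (1−ε)ᵗ·‖vᵢ‖₂/√n + (r/ε)·‖αᵢ‖₂/√n. -/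
/-- The Euclidean inner product of two vectors in `Fin n → ℝ`. -/
def dotp {n : ℕ} (y z : Fin n → ℝ) : ℝ := ∑ j : Fin n, y j * z j

/-- The Euclidean (ℓ²) norm of a vector in `Fin n → ℝ`. -/
noncomputable def norm2 {n : ℕ} (y : Fin n → ℝ) : ℝ := Real.sqrt (∑ j : Fin n, y j ^ 2)
/-!
The welfare `𝟙ᵀu(t)` splits along `p` and its orthogonal complement: `𝟙 = q + ⟪p,𝟙⟫·p` with
`q ⊥ p` and `‖q‖ ≤ √n`. Since `A` is symmetric and fixes `p`, it preserves `p⊥` and leaves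
`⟪p, u(t) + b(t)⟫` unchanged, so the `p`-component gives exactly `cᵀvᵢ − cᵀbᵢ(t)`. Along `q` the
initial utility is damped by `1 − ε` per step, while every step injects a boredom increment of norm
at most `r‖αᵢ‖` (memories stay in `[0, 1]`); summing the geometric series gives the error term
`√n·((1−ε)ᵗ‖vᵢ‖ + (r/ε)‖αᵢ‖)`.
-/

open Finset Matrix

section Euclidean

variable {n : ℕ}

lemma dotp_eq_dotProduct (y z : Fin n → ℝ) : dotp y z = y ⬝ᵥ z := rfl

lemma norm2_eq_sqrt_dotp (y : Fin n → ℝ) : norm2 y = √(dotp y y) := by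
  simp only [norm2, dotp, sq]

lemma norm2_nonneg (y : Fin n → ℝ) : 0 ≤ norm2 y := Real.sqrt_nonneg _

lemma norm2_const_one : norm2 (fun _ : Fin n => (1 : ℝ)) = √n := by
  simp [norm2]

lemma abs_dotp_le_norm2_mul_norm2 (y z : Fin n → ℝ) : |dotp y z| ≤ norm2 y * norm2 z := by
  have hCS := Real.sum_mul_le_sqrt_mul_sqrt univ (fun j => |y j|) (fun j => |z j|)
  simp only [sq_abs] at hCS
  calc |dotp y z| ≤ ∑ j, |y j| * |z j| := by
        simpa only [dotp, abs_mul] using abs_sum_le_sum_abs (fun j => y j * z j) univ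
    _ ≤ norm2 y * norm2 z := hCS

lemma norm2_le_mul_of_abs_le {c : ℝ} (hc : 0 ≤ c) {w z : Fin n → ℝ}
    (h : ∀ j, |w j| ≤ c * |z j|) : norm2 w ≤ c * norm2 z := by
  have hsq : ∑ j, w j ^ 2 ≤ c ^ 2 * ∑ j, z j ^ 2 := by
    rw [mul_sum]
    gcongr with j
    rw [← sq_abs, ← sq_abs (z j), ← mul_pow]
    exact pow_le_pow_left₀ (abs_nonneg _) (h j) 2
  calc norm2 w ≤ √(c ^ 2 * ∑ j, z j ^ 2) := Real.sqrt_le_sqrt hsq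
    _ = c * norm2 z := by rw [Real.sqrt_mul (sq_nonneg c), Real.sqrt_sq hc, norm2]

variable {p : Fin n → ℝ}

lemma dotp_self_eq_one (hp : norm2 p = 1) : dotp p p = 1 := by
  rwa [norm2_eq_sqrt_dotp, Real.sqrt_eq_one] at hp

lemma dotp_sub_dotp_smul_eq_zero (hp : norm2 p = 1) (z : Fin n → ℝ) :
    dotp p (z - dotp p z • p) = 0 := by
  have hpp := dotp_self_eq_one hp
  simp only [dotp_eq_dotProduct, dotProduct_sub, dotProduct_smul, smul_eq_mul] at hpp ⊢
  rw [hpp, mul_one, sub_self]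

lemma norm2_sub_dotp_smul_le (hp : norm2 p = 1) (z : Fin n → ℝ) :
    norm2 (z - dotp p z • p) ≤ norm2 z := by
  have hpp := dotp_self_eq_one hp
  rw [norm2_eq_sqrt_dotp, norm2_eq_sqrt_dotp]
  refine Real.sqrt_le_sqrt ?_
  simp only [dotp_eq_dotProduct, dotProduct_sub, sub_dotProduct, dotProduct_smul,
    smul_dotProduct, smul_eq_mul, dotProduct_comm z p] at hpp ⊢
  nlinarith [sq_nonneg (p ⬝ᵥ z)]

end Euclidean

section Dynamics

variable {n : ℕ} {A : Matrix (Fin n) (Fin n) ℝ} {p : Fin n → ℝ}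

lemma dotp_mulVec_of_isSymm (hA : A.IsSymm) (y z : Fin n → ℝ) :
    dotp y (A *ᵥ z) = dotp (A *ᵥ y) z := by
  rw [dotp_eq_dotProduct, dotProduct_mulVec, ← hA.eq, vecMul_transpose, hA.eq]
  rfl

lemma dotp_mulVec_of_mulVec_eq_self (hA : A.IsSymm) (hAp : A *ᵥ p = p) (z : Fin n → ℝ) :
    dotp p (A *ᵥ z) = dotp p z := by
  rw [dotp_mulVec_of_isSymm hA, hAp]

lemma dotp_add_eq_of_step (hA : A.IsSymm) (hAp : A *ᵥ p = p) {u b : ℕ → Fin n → ℝ}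
    (hu : ∀ t, u (t + 1) = A *ᵥ u t - (b (t + 1) - b t)) (t : ℕ) :
    dotp p (u t + b t) = dotp p (u 0 + b 0) := by
  induction t with
  | zero => rfl
  | succ t ih =>
    have hsum : u (t + 1) + b (t + 1) = A *ᵥ u t + b t := by rw [hu]; abel
    rw [← ih, hsum]
    simp only [dotp_eq_dotProduct, dotProduct_add]
    rw [← dotp_eq_dotProduct p (A *ᵥ u t), dotp_mulVec_of_mulVec_eq_self hA hAp]
    rfl

theorem abs_dotp_le_of_contraction (hA : A.IsSymm) (hAp : A *ᵥ p = p) {ε : ℝ} (hε0 : 0 < ε)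
    (hε1 : ε ≤ 1) (hcontract : ∀ y, dotp p y = 0 → norm2 (A *ᵥ y) ≤ (1 - ε) * norm2 y)
    {u d : ℕ → Fin n → ℝ} {δ : ℝ} (hd : ∀ t, norm2 (d t) ≤ δ)
    (hu : ∀ t, u (t + 1) = A *ᵥ u t - d t) (t : ℕ) {y : Fin n → ℝ} (hy : dotp p y = 0) :
    |dotp y (u t)| ≤ norm2 y * ((1 - ε) ^ t * norm2 (u 0) + δ / ε) := by
  have hδ : 0 ≤ δ := (norm2_nonneg _).trans (hd 0)
  induction t generalizing y with
  | zero =>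
    have hbound := abs_dotp_le_norm2_mul_norm2 y (u 0)
    have hyδ : 0 ≤ norm2 y * (δ / ε) := by have := norm2_nonneg y; positivity
    rw [pow_zero, one_mul, mul_add]
    linarith
  | succ t ih =>
    have hAy : dotp p (A *ᵥ y) = 0 := by rwa [dotp_mulVec_of_mulVec_eq_self hA hAp]
    have hB : 0 ≤ (1 - ε) ^ t * norm2 (u 0) + δ / ε := by
      have := norm2_nonneg (u 0)
      have : 0 ≤ 1 - ε := by linarith
      positivity
    have hprop : |dotp (A *ᵥ y) (u t)| ≤ (1 - ε) * norm2 y * ((1 - ε) ^ t * norm2 (u 0) + δ / ε) :=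
      (ih hAy).trans (mul_le_mul_of_nonneg_right (hcontract y hy) hB)
    have hinput : |dotp y (d t)| ≤ norm2 y * δ :=
      (abs_dotp_le_norm2_mul_norm2 y (d t)).trans
        (mul_le_mul_of_nonneg_left (hd t) (norm2_nonneg y))
    calc |dotp y (u (t + 1))| = |dotp (A *ᵥ y) (u t) - dotp y (d t)| := by
          rw [hu, dotp_eq_dotProduct, dotProduct_sub, ← dotp_eq_dotProduct,
            dotp_mulVec_of_isSymm hA]
          rfl
      _ ≤ (1 - ε) * norm2 y * ((1 - ε) ^ t * norm2 (u 0) + δ / ε) + norm2 y * δ :=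
          (abs_sub _ _).trans (add_le_add hprop hinput)
      _ = norm2 y * ((1 - ε) ^ (t + 1) * norm2 (u 0) + δ / ε) := by
          field_simp
          ring

theorem abs_sum_sub_dotp_le_of_contraction (hA : A.IsSymm) (hAp : A *ᵥ p = p)
    (hp : norm2 p = 1) {ε : ℝ} (hε0 : 0 < ε) (hε1 : ε ≤ 1)
    (hcontract : ∀ y, dotp p y = 0 → norm2 (A *ᵥ y) ≤ (1 - ε) * norm2 y)
    {u b : ℕ → Fin n → ℝ} {δ : ℝ} (hb0 : b 0 = 0) (hb : ∀ t, norm2 (b (t + 1) - b t) ≤ δ)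
    (hu : ∀ t, u (t + 1) = A *ᵥ u t - (b (t + 1) - b t)) (t : ℕ) :
    |(∑ j, u t j) - (dotp (dotp p 1 • p) (u 0) - dotp (dotp p 1 • p) (b t))| ≤
      √n * ((1 - ε) ^ t * norm2 (u 0) + δ / ε) := by
  set one : Fin n → ℝ := 1
  set q := one - dotp p one • p
  have hpu : dotp p (u t) = dotp p (u 0) - dotp p (b t) := by
    have hconserved := dotp_add_eq_of_step hA hAp hu t
    rw [hb0, add_zero] at hconserved
    simp only [dotp_eq_dotProduct, dotProduct_add] at hconserved ⊢
    linarith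
  have herr : (∑ j, u t j) - (dotp (dotp p one • p) (u 0) - dotp (dotp p one • p) (b t)) =
      dotp q (u t) := by
    have hsum : one ⬝ᵥ u t = ∑ j, u t j := by simp [one, dotProduct]
    simp only [q, dotp_eq_dotProduct, smul_dotProduct, sub_dotProduct, smul_eq_mul] at hpu ⊢
    rw [hpu, hsum]
    ring
  have hB : 0 ≤ (1 - ε) ^ t * norm2 (u 0) + δ / ε := by
    have := norm2_nonneg (u 0)
    have := (norm2_nonneg _).trans (hb 0)
    have : 0 ≤ 1 - ε := by linarith
    positivity
  rw [herr]
  calc |dotp q (u t)| ≤ norm2 q * ((1 - ε) ^ t * norm2 (u 0) + δ / ε) :=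
        abs_dotp_le_of_contraction hA hAp hε0 hε1 hcontract hb hu t
          (dotp_sub_dotp_smul_eq_zero hp one)
    _ ≤ √n * ((1 - ε) ^ t * norm2 (u 0) + δ / ε) := by
        rw [← norm2_const_one]
        exact mul_le_mul_of_nonneg_right (norm2_sub_dotp_smul_le hp one) hB

end Dynamics

section Memory

variable {r : ℝ} {M s : ℕ → ℝ}

lemma mem_Icc_of_step (hr0 : 0 ≤ r) (hr1 : r ≤ 1) (hs : ∀ t, s t ∈ Set.Icc 0 1)
    (h0 : M 0 ∈ Set.Icc 0 1) (hM : ∀ t, M (t + 1) = (1 - r) * M t + r * s t) (t : ℕ) :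
    M t ∈ Set.Icc 0 1 := by
  induction t with
  | zero => exact h0
  | succ t ih =>
    obtain ⟨hM0, hM1⟩ := ih
    obtain ⟨hs0, hs1⟩ := hs t
    rw [hM]
    constructor <;> nlinarith

lemma abs_step_sub_le (hr0 : 0 ≤ r) (hr1 : r ≤ 1) (hs : ∀ t, s t ∈ Set.Icc 0 1)
    (h0 : M 0 ∈ Set.Icc 0 1) (hM : ∀ t, M (t + 1) = (1 - r) * M t + r * s t) (t : ℕ) :
    |M (t + 1) - M t| ≤ r := by
  obtain ⟨hM0, hM1⟩ := mem_Icc_of_step hr0 hr1 hs h0 hM t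
  obtain ⟨hs0, hs1⟩ := hs t
  have hdiff : M (t + 1) - M t = r * (s t - M t) := by rw [hM]; ring
  rw [hdiff, abs_mul, abs_of_nonneg hr0]
  exact mul_le_of_le_one_right hr0 (abs_le.2 ⟨by linarith, by linarith⟩)

lemma norm2_mul_step_sub_le (hr0 : 0 ≤ r) (hr1 : r ≤ 1) (hs : ∀ t, s t ∈ Set.Icc 0 1)
    {n : ℕ} {M : Fin n → ℕ → ℝ} (h0 : ∀ j, M j 0 ∈ Set.Icc 0 1)
    (hM : ∀ j t, M j (t + 1) = (1 - r) * M j t + r * s t) (α : Fin n → ℝ) (t : ℕ) :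
    norm2 ((fun j => α j * M j (t + 1)) - fun j => α j * M j t) ≤ r * norm2 α := by
  refine norm2_le_mul_of_abs_le hr0 fun j => ?_
  rw [Pi.sub_apply, ← mul_sub, abs_mul, mul_comm r]
  exact mul_le_mul_of_nonneg_left (abs_step_sub_le hr0 hr1 hs (h0 j) (hM j) t) (abs_nonneg _)

end Memory

lemma abs_div_sub_div_le {a b c x : ℝ} (hx : 0 ≤ x) (h : |a - b| ≤ √x * c) :
    |a / x - b / x| ≤ c / √x := by
  rw [← sub_div, abs_div, abs_of_nonneg hx]
  calc |a - b| / x ≤ √x * c / x := div_le_div_of_nonneg_right h hx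
    _ = c / √x := by rw [mul_comm, mul_div_assoc, Real.sqrt_div_self', mul_one_div]

theorem society_as_individual_general (n m : ℕ)
    (A : Matrix (Fin n) (Fin n) ℝ) (hA : A.IsSymm)
    (ε : ℝ) (hε0 : 0 < ε) (hε1 : ε ≤ 1)
    (p : Fin n → ℝ) (hp : norm2 p = 1) (hAp : A.mulVec p = p)
    (hcontract : ∀ y : Fin n → ℝ, dotp p y = 0 →
      norm2 (A.mulVec y) ≤ (1 - ε) * norm2 y)
    (i : Fin m) (vi αi : Fin n → ℝ)
    (r : ℝ) (hr0 : 0 < r) (hr1 : r < 1)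
    (x : ℕ → Fin m)
    (Mem : Fin n → ℕ → ℝ) (hM0 : ∀ j, Mem j 0 = 0)
    (hMstep : ∀ j t, Mem j (t + 1) = (1 - r) * Mem j t + r * (if x t = i then 1 else 0))
    (u : ℕ → Fin n → ℝ) (hu0 : u 0 = vi)
    (hustep : ∀ t, u (t + 1) =
      A.mulVec (u t) - ((fun j => αi j * Mem j (t + 1)) - (fun j => αi j * Mem j t)))
    (t : ℕ) :
    |(∑ j : Fin n, u t j) -
        (dotp (dotp p (fun _ => 1) • p) vi -
          dotp (dotp p (fun _ => 1) • p) (fun j => αi j * Mem j t))| ≤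
      Real.sqrt n * ((1 - ε) ^ t * norm2 vi + (r / ε) * norm2 αi) ∧
    |(∑ j : Fin n, u t j) / n -
        (dotp (dotp p (fun _ => 1) • p) vi -
          dotp (dotp p (fun _ => 1) • p) (fun j => αi j * Mem j t)) / n| ≤
      (1 - ε) ^ t * norm2 vi / Real.sqrt n + (r / ε) * norm2 αi / Real.sqrt n := by
  have hboredom := norm2_mul_step_sub_le hr0.le hr1.le
    (fun t => show (if x t = i then (1 : ℝ) else 0) ∈ Set.Icc 0 1 by split_ifs <;> simp)
    (fun j => by simp [hM0]) hMstep αi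
  have hmain := abs_sum_sub_dotp_le_of_contraction hA hAp hp hε0 hε1 hcontract
    (b := fun t j => αi j * Mem j t) (funext fun j => by simp [hM0]) hboredom hustep t
  rw [hu0, mul_div_right_comm] at hmain
  refine ⟨hmain, ?_⟩
  rw [← add_div]
  exact abs_div_sub_div_le n.cast_nonneg hmain

/-- (Society behaves like a single individual) Let `A` be a symmetric influence matrix
with unit top eigenvector `p` (`A·p = p`) contracting the orthogonal complement of `p` by
the factor `1−ε`. For a fixed item `i` with base-utility vector `vᵢ` and nonnegative
boredom-coefficient vector `αᵢ`, per-person memories `Mᵢⱼ` evolving by decay rate `r` and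
the society's selection sequence `x`, boredom `bᵢ(t)ⱼ = (αᵢ)ⱼ·Mᵢⱼ(t)`, and utilities
`uᵢ(0) = vᵢ`, `uᵢ(t+1) = A·uᵢ(t) − (bᵢ(t+1) − bᵢ(t))`, we have with `c = ⟪p,𝟙⟫·p`:
`|𝟙ᵀuᵢ(t) − (cᵀvᵢ − cᵀbᵢ(t))| ≤ √n·((1−ε)ᵗ·‖vᵢ‖₂ + (r/ε)·‖αᵢ‖₂)`; in particular the
per-person welfare `𝟙ᵀuᵢ(t)/n` differs from the single-individual utility
`(cᵀvᵢ − cᵀbᵢ(t))/n` by at most `(1−ε)ᵗ·‖vᵢ‖₂/√n + (r/ε)·‖αᵢ‖₂/√n`. -/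
theorem society_as_individual (n m : ℕ) (hn : 0 < n)
    (A : Matrix (Fin n) (Fin n) ℝ) (hA : A.IsSymm)
    (ε : ℝ) (hε0 : 0 < ε) (hε1 : ε ≤ 1)
    (p : Fin n → ℝ) (hp : norm2 p = 1) (hAp : A.mulVec p = p)
    (hcontract : ∀ y : Fin n → ℝ, dotp p y = 0 →
      norm2 (A.mulVec y) ≤ (1 - ε) * norm2 y)
    (i : Fin m) (vi αi : Fin n → ℝ) (hαi : ∀ j, 0 ≤ αi j)
    (r : ℝ) (hr0 : 0 < r) (hr1 : r < 1)
    (x : ℕ → Fin m)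
    (Mem : Fin n → ℕ → ℝ) (hM0 : ∀ j, Mem j 0 = 0)
    (hMstep : ∀ j t, Mem j (t + 1) = (1 - r) * Mem j t + r * (if x t = i then 1 else 0))
    (u : ℕ → Fin n → ℝ) (hu0 : u 0 = vi)
    (hustep : ∀ t, u (t + 1) =
      A.mulVec (u t) - ((fun j => αi j * Mem j (t + 1)) - (fun j => αi j * Mem j t)))
    (t : ℕ) :
    |(∑ j : Fin n, u t j) -
        (dotp (dotp p (fun _ => 1) • p) vi -
          dotp (dotp p (fun _ => 1) • p) (fun j => αi j * Mem j t))| ≤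
      Real.sqrt n * ((1 - ε) ^ t * norm2 vi + (r / ε) * norm2 αi) ∧
    |(∑ j : Fin n, u t j) / n -
        (dotp (dotp p (fun _ => 1) • p) vi -
          dotp (dotp p (fun _ => 1) • p) (fun j => αi j * Mem j t)) / n| ≤
      (1 - ε) ^ t * norm2 vi / Real.sqrt n + (r / ε) * norm2 αi / Real.sqrt n :=
  society_as_individual_general n m A hA ε hε0 hε1 p hp hAp hcontract i vi αi r hr0 hr1 x Mem hM0
    hMstep u hu0 hustep t
end
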